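/- arXiv:1512.09321 — 2 statements merged into one kernel-verified Lean document; each statement's English description precedes it below -/
import Mathlib

section
/- Let w ≤ -1 be an integer, let S be a combinatorial w-Hom configuration having exactly k outer-isolated vertices, and let s ∈ S be an arc with no overarc in S. Then there are exactly k + 1 d-admissible arcs a such that (S \ {s}) ∪ {a} is a combinatorial w-Hom configuration (one of these arcs being s itself); equivalently, s has exactly k replacements. -/
open Set

/-- An arc of the `∞`-gon: a pair of integers `(t, u)`, source `t`, target `u`. -/
abbrev Arc := ℤ × ℤ

/-- `(t,u)` is `d`-admissible for `d = w - 1`: `u - t ≤ w` and `u - t ≡ 1 (mod d)`. -/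
def IsAdmissible (w : ℤ) (a : Arc) : Prop :=
  a.2 - a.1 ≤ w ∧ (w - 1) ∣ (a.2 - a.1 - 1)

/-- `p` is an endpoint of the arc `a`. -/
def IsEndpoint (p : ℤ) (a : Arc) : Prop := p = a.1 ∨ p = a.2

/-- `b = (v,x)` is an overarc of `a = (t,u)` if `x < u < t < v`. -/
def OverarcOf (b a : Arc) : Prop := b.2 < a.2 ∧ a.2 < a.1 ∧ a.1 < b.1

/-- `b = (v,x)` is an overarc of the integer `p` if `x < p < v`. -/
def OverarcOfVertex (b : Arc) (p : ℤ) : Prop := b.2 < p ∧ p < b.1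

/-- Arcs `a` and `b` share an endpoint. -/
def SharesEndpoint (a b : Arc) : Prop :=
  a.1 = b.1 ∨ a.1 = b.2 ∨ a.2 = b.1 ∨ a.2 = b.2

/-- Arcs `a = (t,u)` and `b = (v,x)` strictly cross: `u < x < t < v` or `x < u < v < t`. -/
def StrictCross (a b : Arc) : Prop :=
  (a.2 < b.2 ∧ b.2 < a.1 ∧ a.1 < b.1) ∨ (b.2 < a.2 ∧ a.2 < b.1 ∧ b.1 < a.1)

/-- Two arcs cross if they share an endpoint or strictly cross. -/
def Cross (a b : Arc) : Prop := SharesEndpoint a b ∨ StrictCross a b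

/-- `p` is isolated with respect to `X` if it is an endpoint of no arc of `X`. -/
def Isolated (X : Set Arc) (p : ℤ) : Prop := ∀ a ∈ X, ¬ IsEndpoint p a

/-- `p` is an inner-isolated vertex of the arc `b` with respect to `X`: `p` is isolated,
`b` is an overarc of `p`, and no arc of `X` of which `b` is an overarc is an overarc of `p`. -/
def InnerIsolatedOf (X : Set Arc) (b : Arc) (p : ℤ) : Prop :=
  Isolated X p ∧ OverarcOfVertex b p ∧ ∀ c ∈ X, OverarcOf b c → ¬ OverarcOfVertex c p

/-- `p` is an outer-isolated vertex of `X`: isolated with no overarc in `X`. -/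
def OuterIsolated (X : Set Arc) (p : ℤ) : Prop :=
  Isolated X p ∧ ∀ b ∈ X, ¬ OverarcOfVertex b p

/-- A combinatorial `w`-Hom configuration: a set of `d`-admissible arcs (`d = w - 1`),
pairwise noncrossing, such that every arc has exactly `|w| - 1` inner-isolated vertices
and there are at most `|w|` outer-isolated vertices. -/
def IsHomConfig (w : ℤ) (S : Set Arc) : Prop :=
  (∀ a ∈ S, IsAdmissible w a) ∧
  (∀ a ∈ S, ∀ b ∈ S, a ≠ b → ¬ Cross a b) ∧
  (∀ a ∈ S, {p : ℤ | InnerIsolatedOf S a p}.encard = ((-w - 1).toNat : ℕ∞)) ∧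
  {p : ℤ | OuterIsolated S p}.encard ≤ ((-w).toNat : ℕ∞)

/-- A combinatorial `w`-Riedtmann configuration: a `w`-Hom configuration with at most
`|w| - 1` outer-isolated vertices. -/
def IsRiedtmann (w : ℤ) (S : Set Arc) : Prop :=
  IsHomConfig w S ∧ {p : ℤ | OuterIsolated S p}.encard ≤ ((-w - 1).toNat : ℕ∞)

/-- A combinatorial `w`-simple-minded system: a `w`-Riedtmann configuration in which
every arc has an overarc. -/
def IsSMS (w : ℤ) (S : Set Arc) : Prop :=
  IsRiedtmann w S ∧ ∀ a ∈ S, ∃ b ∈ S, OverarcOf b a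

/-- `t` is a replacement of `s` in the `w`-Hom configuration `S`. -/
def IsReplacement (w : ℤ) (S : Set Arc) (s t : Arc) : Prop :=
  t ≠ s ∧ IsHomConfig w ((S \ {s}) ∪ {t})

/-- `c` is a Ptolemy arc of class I associated to the strictly crossing arcs `a` and `b`:
one of the four arcs joining an endpoint of `a` to an endpoint of `b`. -/
def IsPtolemyI (a b c : Arc) : Prop :=
  StrictCross a b ∧ c.2 < c.1 ∧
    ((IsEndpoint c.1 a ∧ IsEndpoint c.2 b) ∨ (IsEndpoint c.1 b ∧ IsEndpoint c.2 a))

/-- `c` is a Ptolemy arc of class II associated to the neighbouring arcs `a` and `b`: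
the distance `1` is realised by endpoints `p` and `p - 1`, and `c` joins the endpoint of
`a` other than `p, p-1` to the endpoint of `b` other than `p, p-1`. -/
def IsPtolemyII (a b c : Arc) : Prop :=
  ¬ Cross a b ∧
  ∃ p e f : ℤ,
    (((IsEndpoint p a ∧ IsEndpoint (p - 1) b) ∧ (IsEndpoint e a ∧ e ≠ p) ∧
        (IsEndpoint f b ∧ f ≠ p - 1)) ∨
     ((IsEndpoint p b ∧ IsEndpoint (p - 1) a) ∧ (IsEndpoint e b ∧ e ≠ p) ∧
        (IsEndpoint f a ∧ f ≠ p - 1))) ∧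
    c = (max e f, min e f)

/-- `Y` is a set of `d`-admissible arcs closed under adjoining `d`-admissible Ptolemy arcs
of classes I and II. -/
def PtolemyClosed (w : ℤ) (Y : Set Arc) : Prop :=
  (∀ a ∈ Y, IsAdmissible w a) ∧
  ∀ a ∈ Y, ∀ b ∈ Y, ∀ c : Arc,
    (IsPtolemyI a b c ∨ IsPtolemyII a b c) → IsAdmissible w c → c ∈ Y

/-- The Ptolemy closure of `X`: the smallest set of `d`-admissible arcs containing `X`
and closed under adjoining `d`-admissible Ptolemy arcs of classes I and II. -/
def PtolemyClosure (w : ℤ) (X : Set Arc) : Set Arc :=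
  ⋂₀ {Y : Set Arc | X ⊆ Y ∧ PtolemyClosed w Y}

/-- `p` is a left fountain of `A`: infinitely many arcs of `A` have source `p`. -/
def LeftFountain (A : Set Arc) (p : ℤ) : Prop := {a ∈ A | a.1 = p}.Infinite

/-- `p` is a right fountain of `A`: infinitely many arcs of `A` have target `p`. -/
def RightFountain (A : Set Arc) (p : ℤ) : Prop := {a ∈ A | a.2 = p}.Infinite

/-- The set `X_S = { (t + j, u + j) : (t,u) ∈ S, 0 ≤ j ≤ |w| - 1 }`, corresponding to the
union of the shifted copies `Σ^i S` for `w + 1 ≤ i ≤ 0`. -/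
def ShiftFamily (w : ℤ) (S : Set Arc) : Set Arc :=
  {c : Arc | ∃ a ∈ S, ∃ j : ℤ, 0 ≤ j ∧ j ≤ -w - 1 ∧ c = (a.1 + j, a.2 + j)}

/-!
Removing the outer arc `s` frees its two endpoints and its `|w| - 1` inner-isolated vertices,
so `S \ {s}` has `k + |w| + 1` outer-isolated vertices. An arc `(y, x)` can be added to
`S \ {s}` exactly when `x` and `y` are among them and exactly `|w| - 1` of them lie strictly
between `x` and `y`; those become the inner-isolated vertices of the new arc. Admissibility is
then automatic: every other point strictly between `x` and `y` is an endpoint or an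
inner-isolated vertex of one of the `A` arcs nested under `(y, x)`, each of which accounts for
`|w| + 1` points, so `x - y = w + A (w - 1)`. Listing the outer-isolated vertices as
`o₀ < o₁ < ⋯`, the arcs that can be added are the `(oᵢ₊|w|, oᵢ)`, and there are `k + 1` of them.
-/

def Noncrossing (X : Set Arc) : Prop := ∀ a ∈ X, ∀ b ∈ X, a ≠ b → ¬ Cross a b

def ownedVertices (X : Set Arc) (c : Arc) : Set ℤ := {p | IsEndpoint p c ∨ InnerIsolatedOf X c p}

section

variable {w : ℤ} {X Y S : Set Arc} {a b c e s : Arc} {p x y : ℤ}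

section Geometry

lemma IsAdmissible.snd_lt_fst (hw : w ≤ -1) (h : IsAdmissible w a) : a.2 < a.1 := by
  have := h.1
  omega

lemma Noncrossing.mono (hYX : Y ⊆ X) (hX : Noncrossing X) : Noncrossing Y :=
  fun a ha b hb => hX a (hYX ha) b (hYX hb)

lemma Noncrossing.ends_ne_and_not_strictCross (hX : Noncrossing X) (ha : a ∈ X) (hb : b ∈ X)
    (hab : a ≠ b) :
    a.1 ≠ b.1 ∧ a.1 ≠ b.2 ∧ a.2 ≠ b.1 ∧ a.2 ≠ b.2 ∧
      ¬(a.2 < b.2 ∧ b.2 < a.1 ∧ a.1 < b.1) ∧ ¬(b.2 < a.2 ∧ a.2 < b.1 ∧ b.1 < a.1) := by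
  have h := hX a ha b hb hab
  simp only [Cross, SharesEndpoint, StrictCross] at h
  omega

lemma Noncrossing.eq_of_isEndpoint (hX : Noncrossing X) (ha : a ∈ X) (hb : b ∈ X)
    (hpa : IsEndpoint p a) (hpb : IsEndpoint p b) : a = b := by
  by_contra hab
  have := hX.ends_ne_and_not_strictCross ha hb hab
  unfold IsEndpoint at hpa hpb
  omega

lemma Noncrossing.injOn_fst (hX : Noncrossing X) : InjOn Prod.fst X :=
  fun _ ha _ hb h => hX.eq_of_isEndpoint ha hb (Or.inl rfl) (Or.inl h)

lemma Noncrossing.injOn_snd (hX : Noncrossing X) : InjOn Prod.snd X :=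
  fun _ ha _ hb h => hX.eq_of_isEndpoint ha hb (Or.inr rfl) (Or.inr h)

lemma InnerIsolatedOf.anti (hYX : Y ⊆ X) (h : InnerIsolatedOf X c p) : InnerIsolatedOf Y c p :=
  ⟨fun e he => h.1 e (hYX he), h.2.1, fun e he => h.2.2 e (hYX he)⟩

/-- An arc lies entirely on one side of an outer-isolated vertex. -/
lemma OuterIsolated.lt_snd (hx : OuterIsolated X x) (hc : c ∈ X) (h : x < c.1) : x < c.2 := by
  have h1 := hx.1 c hc
  have h2 := hx.2 c hc
  simp only [IsEndpoint, OverarcOfVertex] at h1 h2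
  omega

lemma OuterIsolated.fst_lt (hy : OuterIsolated X y) (hc : c ∈ X) (h : c.2 < y) : c.1 < y := by
  have h1 := hy.1 c hc
  have h2 := hy.2 c hc
  simp only [IsEndpoint, OverarcOfVertex] at h1 h2
  omega

lemma Isolated.exists_innerIsolatedOf (hX : Noncrossing X) (hp : Isolated X p) (he : e ∈ X)
    (hep : OverarcOfVertex e p) : ∃ c ∈ X, InnerIsolatedOf X c p := by
  -- take the overarc of `p` with the smallest source; sources are distinct points of `Ioc p e.1`
  set M := {c ∈ X | OverarcOfVertex c p ∧ c.1 ≤ e.1}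
  have hM : M.Finite :=
    Finite.of_finite_image ((finite_Ioc p e.1).subset (by rintro _ ⟨c, hc, rfl⟩; exact
      ⟨hc.2.1.2, hc.2.2⟩)) (hX.injOn_fst.mono fun _ hc => hc.1)
  obtain ⟨c, ⟨hc, hcp, hce⟩, hmin⟩ := exists_min_image M Prod.fst hM ⟨e, he, hep, le_rfl⟩
  refine ⟨c, hc, hp, hcp, fun b hb hcb hbp => ?_⟩
  exact (hmin b ⟨hb, hbp, hcb.2.2.le.trans hce⟩).not_gt hcb.2.2

lemma Noncrossing.overarcOf_or_overarcOf (hX : Noncrossing X) (hb : b ∈ X) (hc : c ∈ X)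
    (hbc : b ≠ c) (hbp : OverarcOfVertex b p) (hcp : OverarcOfVertex c p) :
    OverarcOf b c ∨ OverarcOf c b := by
  have := hX.ends_ne_and_not_strictCross hb hc hbc
  unfold OverarcOfVertex at hbp hcp
  unfold OverarcOf
  omega

lemma Noncrossing.eq_of_mem_ownedVertices (hX : Noncrossing X) (hb : b ∈ X) (hc : c ∈ X)
    (hpb : p ∈ ownedVertices X b) (hpc : p ∈ ownedVertices X c) : b = c := by
  rcases hpb with hpb | hpb <;> rcases hpc with hpc | hpc
  · exact hX.eq_of_isEndpoint hb hc hpb hpc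
  · exact absurd hpb (hpc.1 b hb)
  · exact absurd hpc (hpb.1 c hc)
  · by_contra hbc
    rcases hX.overarcOf_or_overarcOf hb hc hbc hpb.2.1 hpc.2.1 with h | h
    exacts [hpb.2.2 c hc h hpc.2.1, hpc.2.2 b hb h hpb.2.1]

lemma disjoint_outerIsolated_ownedVertices (hc : c ∈ X) :
    Disjoint {p | OuterIsolated X p} (ownedVertices X c) := by
  rintro P hPO hPc p hp
  rcases hPc hp with hpc | hpc
  exacts [(hPO hp).1 c hc hpc, (hPO hp).2 c hc hpc.2.1]

lemma Noncrossing.exists_mem_ownedVertices (hX : Noncrossing X) (hp : ¬ OuterIsolated X p) :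
    ∃ c ∈ X, p ∈ ownedVertices X c := by
  by_cases hiso : Isolated X p
  · obtain ⟨e, he, hep⟩ : ∃ e ∈ X, OverarcOfVertex e p := by
      by_contra! h
      exact hp ⟨hiso, h⟩
    obtain ⟨c, hc, hcp⟩ := hiso.exists_innerIsolatedOf hX he hep
    exact ⟨c, hc, Or.inr hcp⟩
  · simp only [Isolated, not_forall, not_not] at hiso
    obtain ⟨c, hc, hpc⟩ := hiso
    exact ⟨c, hc, Or.inl hpc⟩

lemma ownedVertices_subset_Icc (hlt : c.2 < c.1) : ownedVertices X c ⊆ Icc c.2 c.1 := by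
  rintro p (hpc | hpc)
  · unfold IsEndpoint at hpc
    exact ⟨by omega, by omega⟩
  · exact ⟨hpc.2.1.1.le, hpc.2.1.2.le⟩

lemma finite_ownedVertices : (ownedVertices X c).Finite := by
  refine (((finite_Ioo c.2 c.1).insert c.2).insert c.1).subset ?_
  rintro p ((rfl | rfl) | hpc)
  exacts [.inl rfl, .inr (.inl rfl), .inr (.inr hpc.2.1)]

lemma encard_ownedVertices (hc : c ∈ X) (hlt : c.2 < c.1) {m : ℕ}
    (hm : {p | InnerIsolatedOf X c p}.encard = m) : (ownedVertices X c).encard = m + 2 := by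
  have hends : {p | IsEndpoint p c} = {c.1, c.2} := rfl
  have hdisj : Disjoint {p | IsEndpoint p c} {p | InnerIsolatedOf X c p} :=
    disjoint_left.2 fun p hpc hp => hp.1 c hc hpc
  rw [ownedVertices, ofPred_or, encard_union_eq hdisj, hends, encard_pair hlt.ne', hm, add_comm]

end Geometry

section Counting

lemma mem_Ioo_iff_outerIsolated_or_mem_ownedVertices (hX : Noncrossing X)
    (hpos : ∀ c ∈ X, c.2 < c.1) (hx : OuterIsolated X x) (hy : OuterIsolated X y) :
    p ∈ Ioo x y ↔ p ∈ {p | OuterIsolated X p} ∩ Ioo x y ∨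
      ∃ c ∈ {c ∈ X | x < c.2 ∧ c.1 < y}, p ∈ ownedVertices X c := by
  constructor
  · intro hp
    by_cases hpO : OuterIsolated X p
    · exact .inl ⟨hpO, hp⟩
    obtain ⟨c, hc, hpc⟩ := hX.exists_mem_ownedVertices hpO
    have hpc' := ownedVertices_subset_Icc (hpos c hc) hpc
    exact .inr ⟨c, ⟨hc, hx.lt_snd hc (hp.1.trans_le hpc'.2), hy.fst_lt hc (hpc'.1.trans_lt hp.2)⟩,
      hpc⟩
  · rintro (⟨-, hp⟩ | ⟨c, ⟨hc, hxc, hcy⟩, hpc⟩)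
    · exact hp
    · have hpc' := ownedVertices_subset_Icc (hpos c hc) hpc
      exact ⟨hxc.trans_le hpc'.1, hpc'.2.trans_lt hcy⟩

/-- `A` is the number of arcs of `X` nested between `x` and `y`; each of them accounts for
`m + 2` points of `Ioo x y`. -/
lemma exists_sub_sub_one_eq_add_mul (hX : Noncrossing X) (hpos : ∀ c ∈ X, c.2 < c.1) {m n : ℕ}
    (hinner : ∀ c ∈ X, {p | InnerIsolatedOf X c p}.encard = m)
    (hx : OuterIsolated X x) (hy : OuterIsolated X y) (hxy : x < y)
    (hn : ({p | OuterIsolated X p} ∩ Ioo x y).encard = n) :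
    ∃ A : ℕ, y - x - 1 = n + A * (m + 2) := by
  classical
  have harcs : {c ∈ X | x < c.2 ∧ c.1 < y}.Finite :=
    Finite.of_finite_image ((finite_Ioo x y).subset (by rintro _ ⟨c, hc, rfl⟩; exact
      ⟨hc.2.1, (hpos c hc.1).trans hc.2.2⟩)) (hX.injOn_snd.mono fun _ hc => hc.1)
  have houter := finite_of_encard_eq_coe hn
  set owned : Arc → Finset ℤ := fun c => (finite_ownedVertices (X := X) (c := c)).toFinset
  have hcover : Finset.Ioo x y = houter.toFinset ∪ harcs.toFinset.biUnion owned := by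
    ext p
    rw [Finset.mem_union, Finite.mem_toFinset, Finset.mem_biUnion, ← Finset.mem_coe,
      Finset.coe_Ioo]
    simpa only [Finite.mem_toFinset, owned] using
      mem_Ioo_iff_outerIsolated_or_mem_ownedVertices hX hpos hx hy
  have hdisj : Disjoint houter.toFinset (harcs.toFinset.biUnion owned) := by
    simp only [Finset.disjoint_left, Finset.mem_biUnion, Finite.mem_toFinset, owned]
    rintro p ⟨hpO, -⟩ ⟨c, hc, hpc⟩
    exact disjoint_left.1 (disjoint_outerIsolated_ownedVertices hc.1) hpO hpc
  have hcard_owned : ∀ c ∈ harcs.toFinset, (owned c).card = m + 2 := by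
    intro c hc
    rw [Finite.mem_toFinset] at hc
    rw [← Nat.cast_inj (R := ℕ∞), ← Finite.encard_eq_coe_toFinset_card,
      encard_ownedVertices hc.1 (hpos c hc.1) (hinner c hc.1), Nat.cast_add, Nat.cast_two]
  have hcard_arcs : (harcs.toFinset.biUnion owned).card = harcs.toFinset.card * (m + 2) := by
    rw [Finset.card_biUnion, Finset.sum_congr rfl hcard_owned, Finset.sum_const, smul_eq_mul]
    intro b hb c hc hbc
    simp only [Function.onFun, owned, Finset.disjoint_left, Finite.mem_toFinset]
    exact fun p hpb hpc => hbc (hX.eq_of_mem_ownedVertices ((Finite.mem_toFinset _).1 hb).1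
      ((Finite.mem_toFinset _).1 hc).1 hpb hpc)
  have hcard_outer : houter.toFinset.card = n := by
    rw [← Nat.cast_inj (R := ℕ∞), ← Finite.encard_eq_coe_toFinset_card, hn]
  refine ⟨harcs.toFinset.card, ?_⟩
  have := congrArg Finset.card hcover
  rw [Int.card_Ioo, Finset.card_union_of_disjoint hdisj, hcard_outer, hcard_arcs] at this
  apply_fun ((↑) : ℕ → ℤ) at this
  push_cast at this
  omega

lemma isAdmissible_of_outerIsolated (hw : w ≤ -1) (hX : Noncrossing X)
    (hadm : ∀ c ∈ X, IsAdmissible w c)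
    (hinner : ∀ c ∈ X, {p | InnerIsolatedOf X c p}.encard = (-w - 1).toNat)
    (hx : OuterIsolated X x) (hy : OuterIsolated X y) (hxy : x < y)
    (hn : ({p | OuterIsolated X p} ∩ Ioo x y).encard = (-w - 1).toNat) :
    IsAdmissible w (y, x) := by
  obtain ⟨A, hA⟩ := exists_sub_sub_one_eq_add_mul hX (fun c hc => (hadm c hc).snd_lt_fst hw)
    hinner hx hy hxy hn
  have hm : ((-w - 1).toNat : ℤ) = -w - 1 := Int.toNat_of_nonneg (by omega)
  rw [hm] at hA
  refine ⟨?_, A + 1, ?_⟩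
  · show x - y ≤ w
    nlinarith
  · show x - y - 1 = (w - 1) * (A + 1)
    linear_combination -hA

end Counting

section AddArc

lemma Cross.symm (h : Cross a b) : Cross b a := by
  simp only [Cross, SharesEndpoint, StrictCross] at h ⊢
  omega

lemma not_cross_of_outerIsolated (h2 : OuterIsolated X a.2) (h1 : OuterIsolated X a.1)
    (hc : c ∈ X) : ¬ Cross a c := by
  have := h1.1 c hc
  have := h2.1 c hc
  have := h1.2 c hc
  have := h2.2 c hc
  simp only [Cross, SharesEndpoint, StrictCross, IsEndpoint, OverarcOfVertex] at *
  omega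

lemma Noncrossing.union_singleton (hX : Noncrossing X) (h2 : OuterIsolated X a.2)
    (h1 : OuterIsolated X a.1) : Noncrossing (X ∪ {a}) := by
  rintro b (hb | rfl) c (hc | rfl) hbc
  · exact hX b hb c hc hbc
  · exact fun h => not_cross_of_outerIsolated h2 h1 hb h.symm
  · exact not_cross_of_outerIsolated h2 h1 hc
  · exact absurd rfl hbc

lemma innerIsolatedOf_union_singleton_iff (h2 : OuterIsolated X a.2) (h1 : OuterIsolated X a.1)
    (hc : c ∈ X) : InnerIsolatedOf (X ∪ {a}) c p ↔ InnerIsolatedOf X c p := by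
  refine ⟨InnerIsolatedOf.anti subset_union_left, fun hp => ⟨?_, hp.2.1, ?_⟩⟩
  · rintro e (he | rfl) hpe
    · exact hp.1 e he hpe
    · rcases hpe with rfl | rfl
      exacts [h1.2 c hc hp.2.1, h2.2 c hc hp.2.1]
  · rintro e (he | rfl) hce
    · exact hp.2.2 e he hce
    · exact absurd ⟨hce.1, hce.2.1.trans hce.2.2⟩ (h2.2 c hc)

lemma innerIsolatedOf_union_singleton_self_iff (h2 : OuterIsolated X a.2)
    (h1 : OuterIsolated X a.1) :
    InnerIsolatedOf (X ∪ {a}) a p ↔ p ∈ {p | OuterIsolated X p} ∩ Ioo a.2 a.1 := by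
  constructor
  · rintro ⟨hiso, hap, hmin⟩
    refine ⟨⟨fun e he => hiso e (.inl he), fun e he hep => ?_⟩, hap⟩
    have hae : OverarcOf a e :=
      ⟨h2.lt_snd he (hap.1.trans hep.2), hep.1.trans hep.2, h1.fst_lt he (hep.1.trans hap.2)⟩
    exact hmin e (.inl he) hae hep
  · rintro ⟨hpO, hap⟩
    refine ⟨?_, hap, ?_⟩
    · rintro e (he | rfl) hpe
      · exact hpO.1 e he hpe
      · rcases hpe with rfl | rfl
        exacts [hap.2.false, hap.1.false]
    · rintro e (he | rfl) hee hep
      · exact hpO.2 e he hep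
      · exact hee.1.false

lemma outerIsolated_union_singleton_iff :
    OuterIsolated (X ∪ {a}) p ↔
      OuterIsolated X p ∧ ¬ IsEndpoint p a ∧ ¬ OverarcOfVertex a p := by
  simp only [OuterIsolated, Isolated, mem_union, mem_singleton_iff, or_imp, forall_and,
    forall_eq]
  tauto

lemma encard_outerIsolated_union_singleton_add (h2 : OuterIsolated X a.2)
    (h1 : OuterIsolated X a.1) (hlt : a.2 < a.1) :
    {p | OuterIsolated (X ∪ {a}) p}.encard +
        ({p | OuterIsolated X p} ∩ Ioo a.2 a.1).encard + 2 =
      {p | OuterIsolated X p}.encard := by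
  set O := {p | OuterIsolated X p}
  have hdiff : {p | OuterIsolated (X ∪ {a}) p} = O \ Icc a.2 a.1 := by
    ext p
    simp only [mem_ofPred_eq, outerIsolated_union_singleton_iff, IsEndpoint, OverarcOfVertex,
      mem_sdiff, mem_Icc, O]
    constructor
    · rintro ⟨hp, h⟩
      exact ⟨hp, by omega⟩
    · rintro ⟨hp, h⟩
      exact ⟨hp, by omega⟩
  have hinter : O ∩ Icc a.2 a.1 = insert a.2 (insert a.1 (O ∩ Ioo a.2 a.1)) := by
    ext p
    simp only [mem_inter_iff, mem_insert_iff, mem_Icc, mem_Ioo]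
    constructor
    · rintro ⟨hp, hge, hle⟩
      by_cases hp2 : p = a.2
      · exact .inl hp2
      by_cases hp1 : p = a.1
      · exact .inr (.inl hp1)
      exact .inr (.inr ⟨hp, by omega, by omega⟩)
    · rintro (rfl | rfl | ⟨hp, hgt, hlt'⟩)
      exacts [⟨h2, le_rfl, hlt.le⟩, ⟨h1, hlt.le, le_rfl⟩, ⟨hp, hgt.le, hlt'.le⟩]
  rw [← encard_sdiff_add_encard_inter O (Icc a.2 a.1), hdiff, hinter,
    encard_insert_of_notMem (by simp [hlt.ne]), encard_insert_of_notMem (by simp)]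
  ring

lemma outerIsolated_of_isEndpoint (hXa : Noncrossing (X ∪ {a})) (ha : a ∉ X)
    (hp : IsEndpoint p a) {m : ℕ} (hinner : ∀ c ∈ X, {q | InnerIsolatedOf X c q}.encard = m)
    (hinner' : ∀ c ∈ X, {q | InnerIsolatedOf (X ∪ {a}) c q}.encard = m) :
    OuterIsolated X p := by
  have hiso : Isolated X p := fun c hc hpc =>
    ha (hXa.eq_of_isEndpoint (.inr rfl) (.inl hc) hp hpc ▸ hc)
  refine ⟨hiso, fun e he hep => ?_⟩
  -- otherwise `p` is an inner-isolated vertex of an arc of `X`, and adding `a` takes it away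
  obtain ⟨c, hc, hcp⟩ := hiso.exists_innerIsolatedOf (hXa.mono subset_union_left) he hep
  have hssub : {q | InnerIsolatedOf (X ∪ {a}) c q} ⊂ {q | InnerIsolatedOf X c q} :=
    ssubset_of_subset_not_superset (fun _ => InnerIsolatedOf.anti subset_union_left)
      fun h => (h hcp).1 a (.inr rfl) hp
  have := (finite_of_encard_eq_coe (hinner' c hc)).encard_lt_encard hssub
  rw [hinner c hc, hinner' c hc] at this
  exact this.false

theorem isAdmissible_and_isHomConfig_union_singleton_iff (hw : w ≤ -1)
    (hadm : ∀ c ∈ X, IsAdmissible w c) (hX : Noncrossing X)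
    (hinner : ∀ c ∈ X, {p | InnerIsolatedOf X c p}.encard = (-w - 1).toNat) {k : ℕ}
    (hk : (k : ℕ∞) ≤ (-w).toNat)
    (hO : {p | OuterIsolated X p}.encard = k + (-w - 1).toNat + 2) :
    IsAdmissible w a ∧ IsHomConfig w (X ∪ {a}) ↔
      OuterIsolated X a.2 ∧ OuterIsolated X a.1 ∧ a.2 < a.1 ∧
        ({p | OuterIsolated X p} ∩ Ioo a.2 a.1).encard = (-w - 1).toNat := by
  constructor
  · rintro ⟨ha, hXa⟩
    have haX : a ∉ X := by
      intro haX
      have := hXa.2.2.2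
      rw [union_singleton, insert_eq_of_mem haX, hO] at this
      have : k + (-w - 1).toNat + 2 ≤ (-w).toNat := by exact_mod_cast this
      omega
    have hinner' := fun c hc => hXa.2.2.1 c (.inl hc)
    have h2 := outerIsolated_of_isEndpoint hXa.2.1 haX (.inr rfl) hinner hinner'
    have h1 := outerIsolated_of_isEndpoint hXa.2.1 haX (.inl rfl) hinner hinner'
    refine ⟨h2, h1, ha.snd_lt_fst hw, ?_⟩
    simpa only [innerIsolatedOf_union_singleton_self_iff h2 h1, ofPred_mem_eq] using
      hXa.2.2.1 a (.inr rfl)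
  · rintro ⟨h2, h1, hlt, hn⟩
    have ha : IsAdmissible w a := isAdmissible_of_outerIsolated hw hX hadm hinner h2 h1 hlt hn
    refine ⟨ha, ?_, hX.union_singleton h2 h1, ?_, ?_⟩
    · rintro c (hc | rfl)
      exacts [hadm c hc, ha]
    · rintro c (hc | rfl)
      · simpa only [innerIsolatedOf_union_singleton_iff h2 h1 hc] using hinner c hc
      · simpa only [innerIsolatedOf_union_singleton_self_iff h2 h1, ofPred_mem_eq] using hn
    · have := encard_outerIsolated_union_singleton_add h2 h1 hlt
      rw [hn, hO, add_assoc, add_assoc] at this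
      rw [WithTop.add_right_cancel (by exact_mod_cast ENat.natCast_ne_top _) this]
      exact hk

end AddArc

section RemoveOuterArc

lemma outerIsolated_sdiff_singleton_of_isEndpoint (hS : Noncrossing S)
    (hpos : ∀ c ∈ S, c.2 < c.1) (hs : s ∈ S) (hnoover : ∀ b ∈ S, ¬ OverarcOf b s)
    (hp : IsEndpoint p s) : OuterIsolated (S \ {s}) p := by
  refine ⟨fun c hc hpc => hc.2 (hS.eq_of_isEndpoint hc.1 hs hpc hp), fun c hc hcp => ?_⟩
  have := hS.ends_ne_and_not_strictCross hc.1 hs hc.2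
  have := hpos c hc.1
  have := hpos s hs
  have := hnoover c hc.1
  unfold IsEndpoint at hp
  unfold OverarcOfVertex at hcp
  unfold OverarcOf at this
  omega

lemma innerIsolatedOf_sdiff_singleton_iff (hS : Noncrossing S) (hpos : ∀ c ∈ S, c.2 < c.1)
    (hs : s ∈ S) (hnoover : ∀ b ∈ S, ¬ OverarcOf b s) (hc : c ∈ S \ {s}) :
    InnerIsolatedOf (S \ {s}) c p ↔ InnerIsolatedOf S c p := by
  refine ⟨fun hp => ⟨fun e he hpe => ?_, hp.2.1, fun e he hce => ?_⟩, .anti sdiff_subset⟩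
  · rcases eq_or_ne e s with rfl | hes
    · exact (outerIsolated_sdiff_singleton_of_isEndpoint hS hpos he hnoover hpe).2 c hc hp.2.1
    · exact hp.1 e ⟨he, hes⟩ hpe
  · rcases eq_or_ne e s with rfl | hes
    · exact absurd hce (hnoover c hc.1)
    · exact hp.2.2 e ⟨he, hes⟩ hce

lemma outerIsolated_sdiff_singleton_eq (hS : Noncrossing S) (hpos : ∀ c ∈ S, c.2 < c.1)
    (hs : s ∈ S) (hnoover : ∀ b ∈ S, ¬ OverarcOf b s) :
    {p | OuterIsolated (S \ {s}) p} = {p | OuterIsolated S p} ∪ ownedVertices S s := by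
  ext p
  constructor
  · intro hp
    by_cases hiso : Isolated S p
    · by_cases hov : ∃ b ∈ S, OverarcOfVertex b p
      · obtain ⟨b, hb, hbp⟩ := hov
        obtain rfl : b = s := by_contra fun hbs => hp.2 b ⟨hb, hbs⟩ hbp
        refine .inr (.inr ⟨hiso, hbp, fun e he hbe hep => hp.2 e ⟨he, ?_⟩ hep⟩)
        rintro rfl
        exact hbe.1.false
      · exact .inl ⟨hiso, fun b hb hbp => hov ⟨b, hb, hbp⟩⟩
    · simp only [Isolated, not_forall, not_not] at hiso
      obtain ⟨c, hc, hpc⟩ := hiso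
      obtain rfl : c = s := by_contra fun hcs => hp.1 c ⟨hc, hcs⟩ hpc
      exact .inr (.inl hpc)
  · rintro (hp | hp | hp)
    · exact ⟨fun e he => hp.1 e he.1, fun e he => hp.2 e he.1⟩
    · exact outerIsolated_sdiff_singleton_of_isEndpoint hS hpos hs hnoover hp
    · refine ⟨fun e he => hp.1 e he.1, fun b hb hbp => ?_⟩
      rcases hS.overarcOf_or_overarcOf hs hb.1 (Ne.symm hb.2) hp.2.1 hbp with h | h
      exacts [hp.2.2 b hb.1 h hbp, hnoover b hb.1 h]

lemma encard_outerIsolated_sdiff_singleton (hS : Noncrossing S) (hpos : ∀ c ∈ S, c.2 < c.1)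
    (hs : s ∈ S) (hnoover : ∀ b ∈ S, ¬ OverarcOf b s) {m : ℕ}
    (hm : {p | InnerIsolatedOf S s p}.encard = m) :
    {p | OuterIsolated (S \ {s}) p}.encard = {p | OuterIsolated S p}.encard + (m + 2) := by
  rw [outerIsolated_sdiff_singleton_eq hS hpos hs hnoover,
    encard_union_eq (disjoint_outerIsolated_ownedVertices hs),
    encard_ownedVertices hs (hpos s hs) hm]

lemma setOf_isReplacement_eq : {t | IsReplacement w S s t} =
    {a | IsAdmissible w a ∧ IsHomConfig w ((S \ {s}) ∪ {a})} \ {s} := by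
  ext t
  simp only [IsReplacement, mem_ofPred_eq, mem_sdiff, mem_singleton_iff]
  exact ⟨fun ⟨hts, ht⟩ => ⟨⟨ht.1 t (.inr rfl), ht⟩, hts⟩, fun ⟨⟨_, ht⟩, hts⟩ => ⟨hts, ht⟩⟩

end RemoveOuterArc

section Enumeration

variable {α : Type*} [LinearOrder α]

lemma Finset.encard_coe_inter_Ioo_orderEmbOfFin (F : Finset α) {N : ℕ} (hF : F.card = N)
    (i j : Fin N) :
    ((F : Set α) ∩ Set.Ioo (F.orderEmbOfFin hF i) (F.orderEmbOfFin hF j)).encard =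
      (j - i - 1 : ℕ) := by
  rw [← F.range_orderEmbOfFin hF, ← image_preimage_eq_range_inter, OrderEmbedding.preimage_Ioo,
    (F.orderEmbOfFin hF).injective.encard_image, ← coe_Ioo, encard_coe_eq_coe_finsetCard,
    Fin.card_Ioo]

lemma encard_setOf_encard_inter_Ioo_eq {O : Set α} {k m : ℕ}
    (hO : O.encard = k + m + 2) :
    {a : α × α | a.2 ∈ O ∧ a.1 ∈ O ∧ a.2 < a.1 ∧ (O ∩ Ioo a.2 a.1).encard = m}.encard =
      k + 1 := by
  have hfin : O.Finite := finite_of_encard_eq_coe (k := k + m + 2) (by exact_mod_cast hO)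
  obtain ⟨F, rfl⟩ := hfin.exists_finset_coe
  have hF : F.card = k + m + 2 := by
    rw [encard_coe_eq_coe_finsetCard] at hO
    exact_mod_cast hO
  set E := F.orderEmbOfFin hF
  have hrange : range E = F := F.range_orderEmbOfFin hF
  have hgap := F.encard_coe_inter_Ioo_orderEmbOfFin hF
  -- listing `F` increasingly, the admissible pairs are exactly the `(E (i + m + 1), E i)`
  let g : Fin (k + 1) → α × α := fun i => (E ⟨i + m + 1, by omega⟩, E ⟨i, by omega⟩)
  have hg : Function.Injective g := fun i j h => by
    have := E.injective (congrArg Prod.snd h)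
    ext
    simpa using this
  have hset : {a : α × α | a.2 ∈ (F : Set α) ∧ a.1 ∈ (F : Set α) ∧ a.2 < a.1 ∧
      (↑F ∩ Ioo a.2 a.1).encard = m} = range g := by
    ext ⟨t, u⟩
    simp only [mem_ofPred_eq, mem_range, g, Prod.mk.injEq]
    constructor
    · rintro ⟨hu, ht, hut, hm⟩
      obtain ⟨i, rfl⟩ : u ∈ range E := hrange ▸ hu
      obtain ⟨j, rfl⟩ : t ∈ range E := hrange ▸ ht
      rw [hgap, Nat.cast_inj] at hm
      have hij : i < j := E.lt_iff_lt.1 hut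
      rw [Fin.lt_def] at hij
      refine ⟨⟨i, by omega⟩, congrArg E (Fin.ext ?_), rfl⟩
      simp only
      omega
    · rintro ⟨i, rfl, rfl⟩
      have hlt : (⟨i, by omega⟩ : Fin (k + m + 2)) < ⟨i + m + 1, by omega⟩ := by
        rw [Fin.lt_def]
        simp
      refine ⟨(hrange ▸ mem_range_self _ :), (hrange ▸ mem_range_self _ :), E.lt_iff_lt.2 hlt, ?_⟩
      rw [hgap]
      congr 1
      simp only
      omega
  rw [hset, ← image_univ, hg.encard_image, encard_univ, ENat.card_eq_coe_fintype_card,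
    Fintype.card_fin]
  push_cast
  rfl

end Enumeration

end

/-- if `S` is a combinatorial `w`-Hom configuration (`w ≤ -1`) with exactly
`k` outer-isolated vertices and `s ∈ S` has no overarc in `S`, then there are exactly
`k + 1` `d`-admissible arcs `a` such that `(S \ {s}) ∪ {a}` is a combinatorial `w`-Hom
configuration, one of them being `s` itself; equivalently, `s` has exactly `k`
replacements. -/
theorem stmt_7 (w : ℤ) (hw : w ≤ -1) (S : Set Arc) (hS : IsHomConfig w S) (k : ℕ)
    (hout : {p : ℤ | OuterIsolated S p}.encard = (k : ℕ∞))
    (s : Arc) (hs : s ∈ S) (hnoover : ∀ b ∈ S, ¬ OverarcOf b s) :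
    {a : Arc | IsAdmissible w a ∧ IsHomConfig w ((S \ {s}) ∪ {a})}.encard
        = ((k + 1 : ℕ) : ℕ∞) ∧
      s ∈ {a : Arc | IsAdmissible w a ∧ IsHomConfig w ((S \ {s}) ∪ {a})} ∧
      {t : Arc | IsReplacement w S s t}.encard = (k : ℕ∞) := by
  obtain ⟨hadm, hnc, hinner, houter⟩ := hS
  have hpos : ∀ c ∈ S, c.2 < c.1 := fun c hc => (hadm c hc).snd_lt_fst hw
  have hTinner : ∀ c ∈ S \ {s}, {p | InnerIsolatedOf (S \ {s}) c p}.encard = (-w - 1).toNat :=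
    fun c hc => by
      simpa only [innerIsolatedOf_sdiff_singleton_iff hnc hpos hs hnoover hc] using hinner c hc.1
  have hTouter : {p | OuterIsolated (S \ {s}) p}.encard = k + (-w - 1).toNat + 2 := by
    rw [encard_outerIsolated_sdiff_singleton hnc hpos hs hnoover (hinner s hs), hout, add_assoc]
  have hchar : {a : Arc | IsAdmissible w a ∧ IsHomConfig w ((S \ {s}) ∪ {a})}.encard = k + 1 := by
    rw [← encard_setOf_encard_inter_Ioo_eq hTouter]
    congr 1
    ext a
    exact isAdmissible_and_isHomConfig_union_singleton_iff hw (fun c hc => hadm c hc.1)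
      (Noncrossing.mono sdiff_subset hnc) hTinner (hout ▸ houter) hTouter
  have hsmem : s ∈ {a : Arc | IsAdmissible w a ∧ IsHomConfig w ((S \ {s}) ∪ {a})} := by
    refine ⟨hadm s hs, ?_⟩
    rw [sdiff_union_self, union_singleton, insert_eq_of_mem hs]
    exact ⟨hadm, hnc, hinner, houter⟩
  refine ⟨by exact_mod_cast hchar, hsmem, ?_⟩
  rw [setOf_isReplacement_eq, encard_sdiff_singleton_of_mem hsmem, hchar]
  norm_cast
end

section
/- Let w ≤ -1 be an integer and d := w - 1. Let S be a set of pairwise noncrossing d-admissible arcs with only finitely many outer-isolated vertices, and suppose S contains an outer-arc. Then the Ptolemy closure of S has a right fountain that is not a left fountain, and also a left fountain that is not a right fountain. -/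
open Set

section Stmt9Aux

lemma s9_adm_lt {w : ℤ} (hw : w ≤ -1) {a : Arc} (h : IsAdmissible w a) : a.2 < a.1 := by
  have h1 := h.1; omega

lemma s9_subset_closure (w : ℤ) (S : Set Arc) : S ⊆ PtolemyClosure w S := by
  intro x hx
  exact Set.mem_sInter.mpr fun Y hY => hY.1 hx

lemma s9_closure_subset {w : ℤ} {S Y : Set Arc} (h1 : S ⊆ Y) (h2 : PtolemyClosed w Y) :
    PtolemyClosure w S ⊆ Y :=
  Set.sInter_subset_of_mem ⟨h1, h2⟩

lemma s9_closure_adm {w : ℤ} {S : Set Arc} (hadm : ∀ a ∈ S, IsAdmissible w a) :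
    ∀ a ∈ PtolemyClosure w S, IsAdmissible w a := fun a ha =>
  s9_closure_subset (Y := {c | IsAdmissible w c}) hadm
    ⟨fun _ h => h, fun _ _ _ _ _ _ hc => hc⟩ ha

lemma s9_closure_step {w : ℤ} {S : Set Arc} {a b c : Arc}
    (ha : a ∈ PtolemyClosure w S) (hb : b ∈ PtolemyClosure w S)
    (hp : IsPtolemyI a b c ∨ IsPtolemyII a b c) (hc : IsAdmissible w c) :
    c ∈ PtolemyClosure w S :=
  Set.mem_sInter.mpr fun Y hY =>
    hY.2.2 a (Set.mem_sInter.mp ha Y hY) b (Set.mem_sInter.mp hb Y hY) c hp hc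

lemma s9_closure_closed {w : ℤ} {S : Set Arc} (hadm : ∀ a ∈ S, IsAdmissible w a) :
    PtolemyClosed w (PtolemyClosure w S) :=
  ⟨s9_closure_adm hadm, fun _ ha _ hb _ hp hc => s9_closure_step ha hb hp hc⟩

/- ### The key "colour" invariant lemmas -/

lemma s9_key1 {w B : ℤ} (hw : w ≤ -1) {a b c : Arc}
    (ha : IsAdmissible w a) (hb : IsAdmissible w b) (hc : IsAdmissible w c)
    (hna : ¬(a.2 < B ∧ B ≤ a.1 ∧ (w - 1) ∣ (a.1 - B)))
    (hnb : ¬(b.2 < B ∧ B ≤ b.1 ∧ (w - 1) ∣ (b.1 - B)))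
    (hcross : StrictCross a b)
    (h1 : IsEndpoint c.1 a) (h2 : IsEndpoint c.2 b) :
    ¬(c.2 < B ∧ B ≤ c.1 ∧ (w - 1) ∣ (c.1 - B)) := by
  rintro ⟨k1, k2, k3⟩
  obtain ⟨ha1, ha2⟩ := ha
  obtain ⟨hb1, hb2⟩ := hb
  obtain ⟨hc1, hc2⟩ := hc
  have h1' : c.1 = a.1 ∨ c.1 = a.2 := h1
  have h2' : c.2 = b.1 ∨ c.2 = b.2 := h2
  have hcr' : (a.2 < b.2 ∧ b.2 < a.1 ∧ a.1 < b.1) ∨ (b.2 < a.2 ∧ a.2 < b.1 ∧ b.1 < a.1) :=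
    hcross
  rcases h1' with h1' | h1'
  · have hBa : B ≤ a.2 := by
      by_contra hh
      push_neg at hh
      exact hna ⟨hh, by omega, by rw [← h1']; exact k3⟩
    rcases h2' with h2' | h2' <;> rcases hcr' with ⟨o1, o2, o3⟩ | ⟨o1, o2, o3⟩
    · omega
    · omega
    · omega
    · refine hnb ⟨by omega, by omega, ?_⟩
      have e1 : b.1 - B = (c.2 - c.1 - 1) - (b.2 - b.1 - 1) + (c.1 - B) := by omega
      rw [e1]
      exact dvd_add (dvd_sub hc2 hb2) k3
  · rcases h2' with h2' | h2' <;> rcases hcr' with ⟨o1, o2, o3⟩ | ⟨o1, o2, o3⟩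
    · omega
    · omega
    · omega
    · refine hnb ⟨by omega, by omega, ?_⟩
      have e1 : b.1 - B = (c.2 - c.1 - 1) - (b.2 - b.1 - 1) + (c.1 - B) := by omega
      rw [e1]
      exact dvd_add (dvd_sub hc2 hb2) k3

lemma s9_key2 {w B : ℤ} (hw : w ≤ -1) {a b : Arc} {p e f : ℤ}
    (ha : IsAdmissible w a) (hb : IsAdmissible w b)
    (hc : IsAdmissible w ((max e f, min e f) : Arc))
    (hna : ¬(a.2 < B ∧ B ≤ a.1 ∧ (w - 1) ∣ (a.1 - B)))
    (hnb : ¬(b.2 < B ∧ B ≤ b.1 ∧ (w - 1) ∣ (b.1 - B)))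
    (hpa : IsEndpoint p a) (hea : IsEndpoint e a) (hep : e ≠ p)
    (hpb : IsEndpoint (p - 1) b) (hfb : IsEndpoint f b) (hfp : f ≠ p - 1) :
    ¬(min e f < B ∧ B ≤ max e f ∧ (w - 1) ∣ (max e f - B)) := by
  rintro ⟨k1, k2, k3⟩
  obtain ⟨ha1, ha2⟩ := ha
  obtain ⟨hb1, hb2⟩ := hb
  obtain ⟨hc1, hc2⟩ := hc
  have hc1' : min e f - max e f ≤ w := hc1
  have hc2' : (w - 1) ∣ min e f - max e f - 1 := hc2
  clear hc1 hc2
  have hpa' : p = a.1 ∨ p = a.2 := hpa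
  have hea' : e = a.1 ∨ e = a.2 := hea
  have hpb' : p - 1 = b.1 ∨ p - 1 = b.2 := hpb
  have hfb' : f = b.1 ∨ f = b.2 := hfb
  have hae : (a.1 = p ∧ a.2 = e) ∨ (a.1 = e ∧ a.2 = p) := by
    rcases hpa' with h | h <;> rcases hea' with h' | h'
    · exact absurd (h'.trans h.symm) hep
    · exact Or.inl ⟨h.symm, h'.symm⟩
    · exact Or.inr ⟨h'.symm, h.symm⟩
    · exact absurd (h'.trans h.symm) hep
  have hbf : (b.1 = p - 1 ∧ b.2 = f) ∨ (b.1 = f ∧ b.2 = p - 1) := by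
    rcases hpb' with h | h <;> rcases hfb' with h' | h'
    · exact absurd (h'.trans h.symm) hfp
    · exact Or.inl ⟨h.symm, h'.symm⟩
    · exact Or.inr ⟨h'.symm, h.symm⟩
    · exact absurd (h'.trans h.symm) hfp
  rcases le_total e f with hef | hef
  · -- max = f, min = e : here e < B ≤ f
    rw [max_eq_right hef] at k2 k3
    rw [min_eq_left hef] at k1
    rw [min_eq_left hef, max_eq_right hef] at hc1' hc2'
    rcases hbf with ⟨hbf1, hbf2⟩ | ⟨hbf1, hbf2⟩
    · -- b = (p-1, f)
      rw [hbf1, hbf2] at hb1 hb2 hnb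
      rcases hae with ⟨hae1, hae2⟩ | ⟨hae1, hae2⟩
      · -- a = (p, e) : Bad a
        rw [hae1, hae2] at ha1 ha2 hna
        refine hna ⟨by omega, by omega, ?_⟩
        have e1 : p - B = (e - f - 1) - (e - p - 1) + (f - B) := by ring
        rw [e1]
        exact dvd_add (dvd_sub hc2' ha2) k3
      · -- a = (e, p) : impossible positions
        rw [hae1, hae2] at ha1 ha2 hna
        omega
    · -- b = (f, p - 1)
      rw [hbf1, hbf2] at hb1 hb2 hnb
      have hpB : B ≤ p - 1 := by
        by_contra hh
        push_neg at hh
        exact hnb ⟨hh, k2, k3⟩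
      rcases hae with ⟨hae1, hae2⟩ | ⟨hae1, hae2⟩
      · -- a = (p, e) : Bad a
        rw [hae1, hae2] at ha1 ha2 hna
        have d1 : (w - 1) ∣ p - f := by
          have e1 : p - f = (e - f - 1) - (e - p - 1) := by ring
          rw [e1]
          exact dvd_sub hc2' ha2
        refine hna ⟨by omega, by omega, ?_⟩
        have e2 : p - B = (p - f) + (f - B) := by ring
        rw [e2]
        exact dvd_add d1 k3
      · -- a = (e, p) : impossible positions
        rw [hae1, hae2] at ha1 ha2 hna
        omega
  · -- max = e, min = f : here f < B ≤ e
    rw [max_eq_left hef] at k2 k3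
    rw [min_eq_right hef] at k1
    rw [min_eq_right hef, max_eq_left hef] at hc1' hc2'
    rcases hae with ⟨hae1, hae2⟩ | ⟨hae1, hae2⟩
    · -- a = (p, e), so e < p
      rw [hae1, hae2] at ha1 ha2 hna
      rcases hbf with ⟨hbf1, hbf2⟩ | ⟨hbf1, hbf2⟩
      · -- b = (p-1, f) : Bad b
        rw [hbf1, hbf2] at hb1 hb2 hnb
        refine hnb ⟨by omega, by omega, ?_⟩
        have e1 : p - 1 - B = (f - e - 1) - (f - (p - 1) - 1) + (e - B) := by ring
        rw [e1]
        exact dvd_add (dvd_sub hc2' hb2) k3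
      · -- b = (f, p-1) : impossible positions
        rw [hbf1, hbf2] at hb1 hb2 hnb
        omega
    · -- a = (e, p), so p < e
      rw [hae1, hae2] at ha1 ha2 hna
      have hpB : B ≤ p := by
        by_contra hh
        push_neg at hh
        exact hna ⟨hh, k2, k3⟩
      rcases eq_or_lt_of_le hpB with heq | hlt
      · -- p = B : then (w-1) ∣ -1, impossible
        have d1 : (w - 1) ∣ (-1 : ℤ) := by
          have e1 : (-1 : ℤ) = (p - e - 1) + (e - B) := by omega
          rw [e1]
          exact dvd_add ha2 k3
        have := Int.isUnit_iff.mp (isUnit_of_dvd_one ((dvd_neg).mp d1))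
        omega
      · rcases hbf with ⟨hbf1, hbf2⟩ | ⟨hbf1, hbf2⟩
        · -- b = (p-1, f) : Bad b
          rw [hbf1, hbf2] at hb1 hb2 hnb
          refine hnb ⟨by omega, by omega, ?_⟩
          have e1 : p - 1 - B = (f - e - 1) - (f - (p - 1) - 1) + (e - B) := by ring
          rw [e1]
          exact dvd_add (dvd_sub hc2' hb2) k3
        · -- b = (f, p-1) : impossible positions
          rw [hbf1, hbf2] at hb1 hb2 hnb
          omega

lemma s9_strictCross_symm {a b : Arc} (h : StrictCross a b) : StrictCross b a := by
  have h' : (a.2 < b.2 ∧ b.2 < a.1 ∧ a.1 < b.1) ∨ (b.2 < a.2 ∧ a.2 < b.1 ∧ b.1 < a.1) := h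
  show (b.2 < a.2 ∧ a.2 < b.1 ∧ b.1 < a.1) ∨ (a.2 < b.2 ∧ b.2 < a.1 ∧ a.1 < b.1)
  tauto

lemma s9_ystar_closed (w B : ℤ) (hw : w ≤ -1) :
    PtolemyClosed w {c : Arc | IsAdmissible w c ∧ ¬(c.2 < B ∧ B ≤ c.1 ∧ (w - 1) ∣ (c.1 - B))} := by
  constructor
  · exact fun a ha => ha.1
  · rintro a ⟨haA, hna⟩ b ⟨hbA, hnb⟩ c hp hcA
    refine ⟨hcA, ?_⟩
    rcases hp with hp | hp
    · obtain ⟨hcr, hlt, hend⟩ := hp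
      rcases hend with ⟨h1, h2⟩ | ⟨h1, h2⟩
      · exact s9_key1 hw haA hbA hcA hna hnb hcr h1 h2
      · exact s9_key1 hw hbA haA hcA hnb hna (s9_strictCross_symm hcr) h1 h2
    · obtain ⟨hncr, p, e, f, hpat, hceq⟩ := hp
      subst hceq
      rcases hpat with ⟨⟨hpa, hpb⟩, ⟨hea, hep⟩, ⟨hfb, hfp⟩⟩ | ⟨⟨hpb, hpa⟩, ⟨heb, hep⟩, ⟨hfa, hfp⟩⟩
      · exact s9_key2 hw haA hbA hcA hna hnb hpa hea hep hpb hfb hfp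
      · exact s9_key2 hw hbA haA hcA hnb hna hpb heb hep hpa hfa hfp

/- ### The sequence of maximal right arcs -/

def seqA (g : ℤ → Arc) (K : ℤ) : ℕ → Arc :=
  fun n => Nat.rec (g K) (fun _ ih => g (ih.1 + 1)) n

lemma seqA_zero (g : ℤ → Arc) (K : ℤ) : seqA g K 0 = g K := rfl

lemma seqA_succ (g : ℤ → Arc) (K : ℤ) (n : ℕ) :
    seqA g K (n + 1) = g ((seqA g K n).1 + 1) := rfl

end Stmt9Aux

section Stmt9Half

lemma s9_half (w : ℤ) (hw : w ≤ -1) (S : Set Arc)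
    (hadm : ∀ a ∈ S, IsAdmissible w a)
    (hnc : ∀ a ∈ S, ∀ b ∈ S, a ≠ b → ¬ Cross a b)
    (hfin : {p : ℤ | OuterIsolated S p}.Finite)
    (houter : ∃ α ∈ S, ∀ b ∈ S, ¬ OverarcOf b α) :
    ∃ p : ℤ, RightFountain (PtolemyClosure w S) p ∧ ¬ LeftFountain (PtolemyClosure w S) p := by
  classical
  obtain ⟨α, hαS, hαout⟩ := houter
  -- every arc with source beyond α is entirely beyond α
  have hright : ∀ c ∈ S, α.1 < c.1 → α.1 < c.2 := by
    intro c hc h1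
    by_contra h2
    push_neg at h2
    have hne : α ≠ c := by rintro rfl; omega
    have h3 : ¬ ((α.1 = c.1 ∨ α.1 = c.2 ∨ α.2 = c.1 ∨ α.2 = c.2) ∨
        ((α.2 < c.2 ∧ c.2 < α.1 ∧ α.1 < c.1) ∨ (c.2 < α.2 ∧ α.2 < c.1 ∧ c.1 < α.1))) :=
      hnc α hαS c hc hne
    have h4 : ¬ (c.2 < α.2 ∧ α.2 < α.1 ∧ α.1 < c.1) := hαout c hc
    have h5 := s9_adm_lt hw (hadm α hαS)
    have h6 := s9_adm_lt hw (hadm c hc)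
    omega
  -- every right arc lies under a maximal right arc
  have hmax : ∀ n : ℕ, ∀ c ∈ S, α.1 < c.2 → (c.2 - α.1).toNat ≤ n →
      ∃ m ∈ S, α.1 < m.2 ∧ (∀ b ∈ S, ¬ OverarcOf b m) ∧ m.2 ≤ c.2 ∧ c.1 ≤ m.1 := by
    intro n
    induction n with
    | zero => intro c hc h1 h2; omega
    | succ n ih =>
      intro c hc h1 h2
      by_cases hov : ∃ b ∈ S, OverarcOf b c
      · obtain ⟨b, hbS, hb⟩ := hov
        have hb' : b.2 < c.2 ∧ c.2 < c.1 ∧ c.1 < b.1 := hb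
        have hαb : α.1 < b.2 := hright b hbS (by omega)
        obtain ⟨m, hmS, hm1, hm2, hm3, hm4⟩ := ih b hbS hαb (by omega)
        exact ⟨m, hmS, hm1, hm2, by omega, by omega⟩
      · push_neg at hov
        exact ⟨c, hc, h1, hov, le_refl _, le_refl _⟩
  have hmax' : ∀ c ∈ S, α.1 < c.2 →
      ∃ m ∈ S, α.1 < m.2 ∧ (∀ b ∈ S, ¬ OverarcOf b m) ∧ m.2 ≤ c.2 ∧ c.1 ≤ m.1 :=
    fun c hc h => hmax (c.2 - α.1).toNat c hc h le_rfl
  -- bound for outer-isolated vertices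
  obtain ⟨U, hU⟩ := hfin.bddAbove
  set K : ℤ := max (α.1 + 1) (U + 1) with hKdef
  have hK1 : α.1 + 1 ≤ K := le_max_left _ _
  have hK2 : U + 1 ≤ K := le_max_right _ _
  -- a tile function
  have htile : ∀ p : ℤ, ∃ m : Arc, K ≤ p →
      m ∈ S ∧ α.1 < m.2 ∧ (∀ b ∈ S, ¬ OverarcOf b m) ∧ m.2 ≤ p ∧ p ≤ m.1 := by
    intro p
    by_cases hp : K ≤ p
    · have hnoi : ¬ OuterIsolated S p := by
        intro h
        have hpU : p ≤ U := (mem_upperBounds.mp hU) p h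
        omega
      have hcov : ∃ c ∈ S, c.2 ≤ p ∧ p ≤ c.1 := by
        by_cases hiso : Isolated S p
        · have hex : ¬ ∀ b ∈ S, ¬ OverarcOfVertex b p := fun hall => hnoi ⟨hiso, hall⟩
          push_neg at hex
          obtain ⟨b, hbS, hv⟩ := hex
          have hv' : b.2 < p ∧ p < b.1 := hv
          exact ⟨b, hbS, by omega, by omega⟩
        · have hiso' : ¬ ∀ a ∈ S, ¬ IsEndpoint p a := hiso
          push_neg at hiso'
          obtain ⟨c, hcS, hce⟩ := hiso'
          have hce' : p = c.1 ∨ p = c.2 := hce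
          have hlt := s9_adm_lt hw (hadm c hcS)
          exact ⟨c, hcS, by omega, by omega⟩
      obtain ⟨c, hcS, hc1, hc2⟩ := hcov
      have hαc : α.1 < c.2 := hright c hcS (by omega)
      obtain ⟨m, hmS, hm1, hm2, hm3, hm4⟩ := hmax' c hcS hαc
      exact ⟨m, fun _ => ⟨hmS, hm1, hm2, by omega, by omega⟩⟩
    · exact ⟨(0, 0), fun h => absurd h hp⟩
  choose g hg using htile
  -- the sequence of consecutive maximal right arcs
  have hP : ∀ n : ℕ, seqA g K n ∈ S ∧ α.1 < (seqA g K n).2 ∧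
      (∀ b ∈ S, ¬ OverarcOf b (seqA g K n)) ∧ K ≤ (seqA g K n).1 := by
    intro n
    induction n with
    | zero =>
      have h := hg K le_rfl
      rw [seqA_zero]
      exact ⟨h.1, h.2.1, h.2.2.1, h.2.2.2.2⟩
    | succ n ih =>
      have hKn : K ≤ (seqA g K n).1 + 1 := by have := ih.2.2.2; omega
      have h := hg ((seqA g K n).1 + 1) hKn
      rw [seqA_succ]
      exact ⟨h.1, h.2.1, h.2.2.1, by have h5 := h.2.2.2.2; omega⟩
  have hbd : ∀ n : ℕ, (seqA g K (n + 1)).2 ≤ (seqA g K n).1 + 1 ∧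
      (seqA g K n).1 + 1 ≤ (seqA g K (n + 1)).1 := by
    intro n
    have hKn : K ≤ (seqA g K n).1 + 1 := by have := (hP n).2.2.2; omega
    have h := hg ((seqA g K n).1 + 1) hKn
    rw [seqA_succ]
    exact ⟨h.2.2.2.1, h.2.2.2.2⟩
  -- maximal right arcs have disjoint tiles
  have hdisj : ∀ m ∈ S, ∀ m' ∈ S, (∀ b ∈ S, ¬ OverarcOf b m) → (∀ b ∈ S, ¬ OverarcOf b m') →
      ∀ p : ℤ, m.2 ≤ p → p ≤ m.1 → m'.2 ≤ p → p ≤ m'.1 → m = m' := by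
    intro m hm m' hm' hmo hm'o p h1 h2 h3 h4
    by_contra hne
    have h5 : ¬ ((m.1 = m'.1 ∨ m.1 = m'.2 ∨ m.2 = m'.1 ∨ m.2 = m'.2) ∨
        ((m.2 < m'.2 ∧ m'.2 < m.1 ∧ m.1 < m'.1) ∨ (m'.2 < m.2 ∧ m.2 < m'.1 ∧ m'.1 < m.1))) :=
      hnc m hm m' hm' hne
    have h6 : ¬ (m'.2 < m.2 ∧ m.2 < m.1 ∧ m.1 < m'.1) := hmo m' hm'
    have h7 : ¬ (m.2 < m'.2 ∧ m'.2 < m'.1 ∧ m'.1 < m.1) := hm'o m hm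
    have h8 := s9_adm_lt hw (hadm m hm)
    have h9 := s9_adm_lt hw (hadm m' hm')
    omega
  have hadj : ∀ n : ℕ, (seqA g K (n + 1)).2 = (seqA g K n).1 + 1 := by
    intro n
    obtain ⟨h1, h2⟩ := hbd n
    by_contra hne
    have hle : (seqA g K (n + 1)).2 ≤ (seqA g K n).1 := by omega
    have heq := hdisj (seqA g K n) (hP n).1 (seqA g K (n + 1)) (hP (n + 1)).1 (hP n).2.2.1
      (hP (n + 1)).2.2.1 ((seqA g K n).1) (le_of_lt (s9_adm_lt hw (hadm _ (hP n).1))) le_rfl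
      hle (by omega)
    have hf : (seqA g K n).1 = (seqA g K (n + 1)).1 := by rw [heq]
    omega
  set B : ℤ := (seqA g K 0).2 with hBdef
  have hB0 : B < (seqA g K 0).1 := s9_adm_lt hw (hadm _ (hP 0).1)
  have hBα : α.1 < B := (hP 0).2.1
  have hmono : ∀ n : ℕ, (seqA g K n).1 < (seqA g K (n + 1)).1 := fun n => by
    have := (hbd n).2; omega
  have hmono0 : ∀ n : ℕ, (seqA g K 0).1 ≤ (seqA g K n).1 := by
    intro n
    induction n with
    | zero => exact le_refl _
    | succ n ih => have := hmono n; omega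
  -- the fountain arcs
  have hfnt : ∀ n : ℕ, (((seqA g K n).1, B) : Arc) ∈ PtolemyClosure w S := by
    intro n
    induction n with
    | zero =>
      have he : (((seqA g K 0).1, B) : Arc) = seqA g K 0 := by
        rw [hBdef]
      rw [he]
      exact s9_subset_closure w S (hP 0).1
    | succ n ih =>
      have hadm_c : IsAdmissible w (((seqA g K (n + 1)).1, B) : Arc) := by
        have h1 := s9_closure_adm hadm _ ih
        have h2 := hadm _ (hP (n + 1)).1
        obtain ⟨h11, h12⟩ := h1
        obtain ⟨h21, h22⟩ := h2
        constructor
        · show B - (seqA g K (n + 1)).1 ≤ w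
          have h11' : B - (seqA g K n).1 ≤ w := h11
          have := hadj n
          omega
        · show (w - 1) ∣ B - (seqA g K (n + 1)).1 - 1
          have h12' : (w - 1) ∣ B - (seqA g K n).1 - 1 := h12
          have e1 : B - (seqA g K (n + 1)).1 - 1 =
              (B - (seqA g K n).1 - 1) + ((seqA g K (n + 1)).2 - (seqA g K (n + 1)).1 - 1) := by
            have := hadj n; omega
          rw [e1]
          exact dvd_add h12' h22
      refine s9_closure_step ih (s9_subset_closure w S (hP (n + 1)).1) ?_ hadm_c
      right
      have hB_n : B < (seqA g K n).1 := by have := hmono0 n; omega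
      have hlt1 := s9_adm_lt hw (hadm _ (hP (n + 1)).1)
      have hadjn := hadj n
      refine ⟨?_, (seqA g K n).1 + 1, (seqA g K (n + 1)).1, B,
        Or.inr ⟨⟨?_, ?_⟩, ⟨?_, ?_⟩, ⟨?_, ?_⟩⟩, ?_⟩
      · -- not crossing
        intro hcr
        simp only [Cross, SharesEndpoint, StrictCross] at hcr
        omega
      · -- p endpoint of b
        exact Or.inr hadjn.symm
      · -- p - 1 endpoint of a
        exact Or.inl (show (seqA g K n).1 + 1 - 1 = (seqA g K n).1 by omega)
      · -- e endpoint of b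
        exact Or.inl rfl
      · -- e ≠ p
        omega
      · -- f endpoint of a
        exact Or.inr rfl
      · -- f ≠ p - 1
        omega
      · -- c = (max e f, min e f)
        have hBe : B ≤ (seqA g K (n + 1)).1 := by omega
        rw [max_eq_left hBe, min_eq_right hBe]
  refine ⟨B, ?_, ?_⟩
  · -- right fountain
    have hsm : StrictMono (fun n : ℕ => (seqA g K n).1) := strictMono_nat_of_lt_succ hmono
    have hinj : Function.Injective (fun n : ℕ => (((seqA g K n).1, B) : Arc)) := by
      intro m n h
      have h' : (((seqA g K m).1, B) : Arc) = ((seqA g K n).1, B) := h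
      rw [Prod.mk.injEq] at h'
      exact hsm.injective h'.1
    exact Set.infinite_of_injective_forall_mem hinj (fun n => ⟨hfnt n, rfl⟩)
  · -- not a left fountain
    have hstr : ∀ s ∈ S, s.2 < B → s.1 < B := by
      intro s hs h1
      by_contra h2
      push_neg at h2
      have h3 : α.1 < s.1 := by omega
      have h4 := hright s hs h3
      obtain ⟨m, hmS, hm1, hm2, hm3, hm4⟩ := hmax' s hs h4
      have heq := hdisj m hmS (seqA g K 0) (hP 0).1 hm2 (hP 0).2.2.1 B (by omega) (by omega)
        (le_of_eq hBdef.symm) (le_of_lt hB0)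
      have hm2B : m.2 = B := by rw [heq, hBdef]
      omega
    have hsub : PtolemyClosure w S ⊆
        {c : Arc | IsAdmissible w c ∧ ¬(c.2 < B ∧ B ≤ c.1 ∧ (w - 1) ∣ (c.1 - B))} := by
      apply s9_closure_subset _ (s9_ystar_closed w B hw)
      intro s hs
      refine ⟨hadm s hs, ?_⟩
      rintro ⟨x1, x2, -⟩
      exact absurd x2 (not_le.mpr (hstr s hs x1))
    intro hLF
    obtain ⟨a, haA, ha1⟩ := Set.Infinite.nonempty hLF
    obtain ⟨hadm_a, hbad⟩ := hsub haA
    refine hbad ⟨?_, ?_, ?_⟩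
    · have := s9_adm_lt hw hadm_a; omega
    · omega
    · rw [ha1]
      simp

end Stmt9Half

section Stmt9Neg

def negArc (a : Arc) : Arc := (-a.2, -a.1)

lemma negArc_fst (a : Arc) : (negArc a).1 = -a.2 := rfl

lemma negArc_snd (a : Arc) : (negArc a).2 = -a.1 := rfl

lemma negArc_negArc (a : Arc) : negArc (negArc a) = a := by
  simp [negArc]

lemma negArc_inj : Function.Injective negArc := fun a b h => by
  have h2 := congrArg negArc h
  rwa [negArc_negArc, negArc_negArc] at h2

lemma s9_adm_negArc {w : ℤ} {a : Arc} : IsAdmissible w (negArc a) ↔ IsAdmissible w a := by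
  simp only [IsAdmissible, negArc_fst, negArc_snd]
  constructor <;> rintro ⟨h1, h2⟩ <;> refine ⟨by omega, ?_⟩
  · have e1 : a.2 - a.1 - 1 = -a.1 - -a.2 - 1 := by ring
    rw [e1]; exact h2
  · have e1 : -a.1 - -a.2 - 1 = a.2 - a.1 - 1 := by ring
    rw [e1]; exact h2

lemma s9_endpoint_negArc {q : ℤ} {a : Arc} : IsEndpoint q (negArc a) ↔ IsEndpoint (-q) a := by
  simp only [IsEndpoint, negArc_fst, negArc_snd]
  omega

lemma s9_cross_negArc {a b : Arc} : Cross (negArc a) (negArc b) ↔ Cross a b := by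
  simp only [Cross, SharesEndpoint, StrictCross, negArc_fst, negArc_snd]
  omega

lemma s9_overarc_negArc {b a : Arc} : OverarcOf (negArc b) (negArc a) ↔ OverarcOf b a := by
  simp only [OverarcOf, negArc_fst, negArc_snd]
  omega

lemma s9_overarcVertex_negArc {b : Arc} {p : ℤ} :
    OverarcOfVertex (negArc b) p ↔ OverarcOfVertex b (-p) := by
  simp only [OverarcOfVertex, negArc_fst, negArc_snd]
  omega

lemma s9_ptolemyI_negArc {a b c : Arc} (h : IsPtolemyI a b c) :
    IsPtolemyI (negArc a) (negArc b) (negArc c) := by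
  simp only [IsPtolemyI, StrictCross, IsEndpoint, negArc_fst, negArc_snd] at h ⊢
  omega

lemma s9_ptolemyII_negArc {a b c : Arc} (h : IsPtolemyII a b c) :
    IsPtolemyII (negArc a) (negArc b) (negArc c) := by
  obtain ⟨hncr, p, e, f, hpat, hceq⟩ := h
  refine ⟨fun hcr => hncr (s9_cross_negArc.mp hcr), 1 - p, -f, -e, ?_, ?_⟩
  · rcases hpat with ⟨⟨hpa, hpb⟩, ⟨hea, hep⟩, ⟨hfb, hfp⟩⟩ | ⟨⟨hpb, hpa⟩, ⟨heb, hep⟩, ⟨hfa, hfp⟩⟩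
    · refine Or.inr ⟨⟨?_, ?_⟩, ⟨?_, ?_⟩, ⟨?_, ?_⟩⟩
      · apply s9_endpoint_negArc.mpr
        have e1 : -(1 - p) = p - 1 := by ring
        rw [e1]; exact hpb
      · apply s9_endpoint_negArc.mpr
        have e1 : -(1 - p - 1) = p := by ring
        rw [e1]; exact hpa
      · apply s9_endpoint_negArc.mpr
        have e1 : -(-f) = f := by ring
        rw [e1]; exact hfb
      · omega
      · apply s9_endpoint_negArc.mpr
        have e1 : -(-e) = e := by ring
        rw [e1]; exact hea
      · omega
    · refine Or.inl ⟨⟨?_, ?_⟩, ⟨?_, ?_⟩, ⟨?_, ?_⟩⟩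
      · apply s9_endpoint_negArc.mpr
        have e1 : -(1 - p) = p - 1 := by ring
        rw [e1]; exact hpa
      · apply s9_endpoint_negArc.mpr
        have e1 : -(1 - p - 1) = p := by ring
        rw [e1]; exact hpb
      · apply s9_endpoint_negArc.mpr
        have e1 : -(-f) = f := by ring
        rw [e1]; exact hfa
      · omega
      · apply s9_endpoint_negArc.mpr
        have e1 : -(-e) = e := by ring
        rw [e1]; exact heb
      · omega
  · rw [hceq]
    have h1 : max (-f) (-e) = -(min e f) := by rw [max_neg_neg, min_comm]
    have h2 : min (-f) (-e) = -(max e f) := by rw [min_neg_neg, max_comm]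
    rw [h1, h2]
    rfl

lemma s9_ptolemyClosed_negArc {w : ℤ} {Y : Set Arc} (h : PtolemyClosed w Y) :
    PtolemyClosed w (negArc ⁻¹' Y) := by
  constructor
  · intro a ha
    exact s9_adm_negArc.mp (h.1 _ ha)
  · intro a ha b hb c hp hc
    refine h.2 (negArc a) ha (negArc b) hb (negArc c) ?_ (s9_adm_negArc.mpr hc)
    rcases hp with hp | hp
    · exact Or.inl (s9_ptolemyI_negArc hp)
    · exact Or.inr (s9_ptolemyII_negArc hp)

lemma s9_closure_negArc {w : ℤ} {S : Set Arc} (hadm : ∀ a ∈ S, IsAdmissible w a) :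
    PtolemyClosure w (negArc ⁻¹' S) = negArc ⁻¹' (PtolemyClosure w S) := by
  have hadm' : ∀ a ∈ negArc ⁻¹' S, IsAdmissible w a := fun a ha => s9_adm_negArc.mp (hadm _ ha)
  apply Set.Subset.antisymm
  · exact s9_closure_subset (fun x hx => s9_subset_closure w S hx)
      (s9_ptolemyClosed_negArc (s9_closure_closed hadm))
  · intro x hx
    have h2 : PtolemyClosure w S ⊆ negArc ⁻¹' (PtolemyClosure w (negArc ⁻¹' S)) := by
      apply s9_closure_subset _ (s9_ptolemyClosed_negArc (s9_closure_closed hadm'))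
      intro s hs
      apply s9_subset_closure
      show negArc (negArc s) ∈ S
      rwa [negArc_negArc]
    have h3 := h2 hx
    have h4 : negArc (negArc x) ∈ PtolemyClosure w (negArc ⁻¹' S) := h3
    rwa [negArc_negArc] at h4

lemma s9_outerIsolated_negArc {S : Set Arc} {p : ℤ} :
    OuterIsolated (negArc ⁻¹' S) p ↔ OuterIsolated S (-p) := by
  simp only [OuterIsolated, Isolated]
  constructor
  · rintro ⟨h1, h2⟩
    constructor
    · intro a ha he
      refine h1 (negArc a) ?_ (s9_endpoint_negArc.mpr he)
      show negArc (negArc a) ∈ S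
      rwa [negArc_negArc]
    · intro b hb hv
      refine h2 (negArc b) ?_ (s9_overarcVertex_negArc.mpr hv)
      show negArc (negArc b) ∈ S
      rwa [negArc_negArc]
  · rintro ⟨h1, h2⟩
    constructor
    · intro a ha he
      exact h1 (negArc a) ha (s9_endpoint_negArc.mpr (by rwa [neg_neg]))
    · intro b hb hv
      exact h2 (negArc b) hb (s9_overarcVertex_negArc.mpr (by rwa [neg_neg]))

end Stmt9Neg

/-- if `S` is a set of pairwise noncrossing `d`-admissible arcs with only
finitely many outer-isolated vertices containing an outer-arc, then the Ptolemy closure of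
`S` has a right fountain that is not a left fountain and a left fountain that is not a
right fountain. -/
theorem stmt_9 (w : ℤ) (hw : w ≤ -1) (S : Set Arc)
    (hadm : ∀ a ∈ S, IsAdmissible w a)
    (hnc : ∀ a ∈ S, ∀ b ∈ S, a ≠ b → ¬ Cross a b)
    (hfin : {p : ℤ | OuterIsolated S p}.Finite)
    (houter : ∃ α ∈ S, ∀ b ∈ S, ¬ OverarcOf b α) :
    (∃ p : ℤ, RightFountain (PtolemyClosure w S) p ∧ ¬ LeftFountain (PtolemyClosure w S) p) ∧
    (∃ p : ℤ, LeftFountain (PtolemyClosure w S) p ∧ ¬ RightFountain (PtolemyClosure w S) p) := by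
  constructor
  · exact s9_half w hw S hadm hnc hfin houter
  · have hadm' : ∀ a ∈ negArc ⁻¹' S, IsAdmissible w a := fun a ha => s9_adm_negArc.mp (hadm _ ha)
    have hnc' : ∀ a ∈ negArc ⁻¹' S, ∀ b ∈ negArc ⁻¹' S, a ≠ b → ¬ Cross a b := by
      intro a ha b hb hne hcr
      exact hnc _ ha _ hb (fun h => hne (negArc_inj h)) (s9_cross_negArc.mpr hcr)
    have hfin' : {p : ℤ | OuterIsolated (negArc ⁻¹' S) p}.Finite := by
      have hEq : {p : ℤ | OuterIsolated (negArc ⁻¹' S) p} =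
          (fun p : ℤ => -p) ⁻¹' {p : ℤ | OuterIsolated S p} := by
        ext p
        exact s9_outerIsolated_negArc
      rw [hEq]
      exact Set.Finite.preimage neg_injective.injOn hfin
    have houter' : ∃ α ∈ negArc ⁻¹' S, ∀ b ∈ negArc ⁻¹' S, ¬ OverarcOf b α := by
      obtain ⟨α, hαS, hαout⟩ := houter
      refine ⟨negArc α, ?_, ?_⟩
      · show negArc (negArc α) ∈ S
        rwa [negArc_negArc]
      · intro b hb hov
        refine hαout (negArc b) hb (s9_overarc_negArc.mp ?_)
        rw [negArc_negArc]
        exact hov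
    obtain ⟨p, hR, hnL⟩ := s9_half w hw (negArc ⁻¹' S) hadm' hnc' hfin' houter'
    have hcl : PtolemyClosure w (negArc ⁻¹' S) = negArc ⁻¹' (PtolemyClosure w S) :=
      s9_closure_negArc hadm
    refine ⟨-p, ?_, ?_⟩
    · -- LeftFountain
      have hsetEq : {a ∈ PtolemyClosure w (negArc ⁻¹' S) | a.2 = p} =
          negArc ⁻¹' {a ∈ PtolemyClosure w S | a.1 = -p} := by
        ext a
        simp only [Set.mem_setOf_eq, Set.mem_preimage, hcl, negArc_fst]
        constructor
        · rintro ⟨h1, h2⟩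
          exact ⟨h1, by omega⟩
        · rintro ⟨h1, h2⟩
          exact ⟨h1, by omega⟩
      by_contra hfin2
      have hfin3 : {a ∈ PtolemyClosure w S | a.1 = -p}.Finite := Set.not_infinite.mp hfin2
      have hfin4 := Set.Finite.preimage negArc_inj.injOn hfin3
      rw [← hsetEq] at hfin4
      exact hfin4.not_infinite hR
    · -- ¬ RightFountain
      intro hRF
      have hsetEq2 : negArc ⁻¹' {a ∈ PtolemyClosure w S | a.2 = -p} =
          {a ∈ PtolemyClosure w (negArc ⁻¹' S) | a.1 = p} := by
        ext a
        simp only [Set.mem_setOf_eq, Set.mem_preimage, hcl, negArc_snd]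
        constructor
        · rintro ⟨h1, h2⟩
          exact ⟨h1, by omega⟩
        · rintro ⟨h1, h2⟩
          exact ⟨h1, by omega⟩
      have hpre : (negArc ⁻¹' {a ∈ PtolemyClosure w S | a.2 = -p}).Infinite := by
        apply Set.Infinite.preimage hRF
        intro x hx
        exact ⟨negArc x, negArc_negArc x⟩
      rw [hsetEq2] at hpre
      exact hnL hpre
end
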